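/- arXiv:1503.05365 — 2 statements merged into one kernel-verified Lean document; each statement's English description precedes it below -/
import Mathlib

section
/- Any critical point P* > 0 of the cached area power consumption 𝒫^(c)(P) = A P^{−2/(2+ε)}(P + P_s + P_d f_0^{1 − (λ_u/A) P^{2/(2+ε)}}) with ε > 0, A > 0, P_s > 0, P_d > 0, f_0 > 1, λ_u > 0 satisfies P* > 2P_s/ε. -/
/-!
Write `c = 2 / (2 + ε) ∈ (0, 1)` and `𝒫^(c)(P) = A P^(-c) g(P)` with
`g(P) = P + P_s + P_d f₀^(1 - (λ_u/A) P^c)`. At a critical point `P g'(P) = c g(P)`.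
The last summand of `g` is positive and strictly decreasing, so `g(P) > P + P_s` and `g'(P) < 1`;
hence `c (P + P_s) < P`, which is `ε P > 2 P_s`.
-/

open Real

theorem deriv_mul_rpow_neg_eq_zero_iff {A c P g' : ℝ} {g : ℝ → ℝ} (hA : A ≠ 0) (hP : 0 < P)
    (hg : HasDerivAt g g' P) :
    deriv (fun x => A * x ^ (-c) * g x) P = 0 ↔ P * g' = c * g P := by
  have hd : HasDerivAt (fun x => A * x ^ (-c) * g x)
      (A * (-c * P ^ (-c - 1)) * g P + A * P ^ (-c) * g') P :=
    ((hasDerivAt_rpow_const (Or.inl hP.ne')).const_mul A).mul hg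
  have hpow : P ^ (-c - 1) = P ^ (-c) / P := by rw [rpow_sub hP, rpow_one]
  have hpos : 0 < P ^ (-c) := rpow_pos_of_pos hP _
  have hfactor : A * (-c * (P ^ (-c) / P)) * g P + A * P ^ (-c) * g'
      = A * P ^ (-c) / P * (P * g' - c * g P) := by field_simp; ring
  rw [hd.deriv, hpow, hfactor, mul_eq_zero, sub_eq_zero, or_iff_right (by positivity)]

theorem exists_neg_hasDerivAt_rpow_one_sub_mul_rpow {b k c P : ℝ} (hb : 1 < b) (hk : 0 < k)
    (hc : 0 < c) (hP : 0 < P) : ∃ d < 0, HasDerivAt (fun x => b ^ (1 - k * x ^ c)) d P := by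
  have hinner : HasDerivAt (fun x => 1 - k * x ^ c) (-(k * (c * P ^ (c - 1)))) P :=
    ((hasDerivAt_rpow_const (Or.inl hP.ne')).const_mul k).const_sub 1
  refine ⟨_, ?_, (hasStrictDerivAt_const_rpow (by linarith) _).hasDerivAt.comp P hinner⟩
  have hpow : 0 < P ^ (c - 1) := rpow_pos_of_pos hP _
  have hbpow : 0 < b ^ (1 - k * P ^ c) := rpow_pos_of_pos (by linarith) _
  exact mul_neg_of_pos_of_neg (mul_pos hbpow (log_pos hb)) (neg_neg_of_pos (by positivity))

theorem apc_caching_critical_point_lower_bound_general (ε A Ps Pd f₀ lamU : ℝ)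
    (hε : 0 < ε) (hA : 0 < A) (hPd : 0 < Pd) (hf₀ : 1 < f₀) (hlamU : 0 < lamU) :
    ∀ P : ℝ, 0 < P →
      deriv (fun P : ℝ =>
        A * P ^ (-2 / (2 + ε)) *
          (P + Ps + Pd * f₀ ^ (1 - (lamU / A) * P ^ (2 / (2 + ε))))) P = 0 →
      P > 2 * Ps / ε := by
  intro P hP hcrit
  rw [neg_div] at hcrit
  set c := 2 / (2 + ε) with hc
  obtain ⟨d, hd, hdecay⟩ :=
    exists_neg_hasDerivAt_rpow_one_sub_mul_rpow (c := c) hf₀ (div_pos hlamU hA) (by positivity) hP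
  have hg : HasDerivAt (fun x => x + Ps + Pd * f₀ ^ (1 - lamU / A * x ^ c)) (1 + Pd * d) P :=
    ((hasDerivAt_id' P).add_const Ps).add (hdecay.const_mul Pd)
  have hbalance := (deriv_mul_rpow_neg_eq_zero_iff hA.ne' hP hg).1 hcrit
  have hdecay_pos : 0 < f₀ ^ (1 - lamU / A * P ^ c) := rpow_pos_of_pos (by linarith) _
  have hlt : c * (P + Ps) < P := by
    nlinarith [mul_pos hP (mul_pos hPd hdecay_pos), mul_neg_of_pos_of_neg (mul_pos hP hPd) hd,
      show 0 < c by positivity]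
  rw [hc, div_mul_eq_mul_div, div_lt_iff₀ (by positivity)] at hlt
  rw [gt_iff_lt, div_lt_iff₀ hε]
  linarith

theorem apc_caching_critical_point_lower_bound (ε A Ps Pd f₀ lamU : ℝ)
    (hε : 0 < ε) (hA : 0 < A) (hPs : 0 < Ps) (hPd : 0 < Pd) (hf₀ : 1 < f₀) (hlamU : 0 < lamU) :
    ∀ P : ℝ, 0 < P →
      deriv (fun P : ℝ =>
        A * P ^ (-2 / (2 + ε)) *
          (P + Ps + Pd * f₀ ^ (1 - (lamU / A) * P ^ (2 / (2 + ε))))) P = 0 →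
      P > 2 * Ps / ε :=
  apc_caching_critical_point_lower_bound_general ε A Ps Pd f₀ lamU hε hA hPd hf₀ hlamU
end

section
/- The maximal energy efficiency value ℰ*(Q) = C(1 − 1/(1+√(1+Q)))/(1 + √(1+Q) + Q), obtained at the optimizer P* = 1+√(1+Q), is strictly decreasing in Q on [0, ∞). -/
theorem ee_optimal_value_strictAnti (C : ℝ) (hC : 0 < C) :
    StrictAntiOn
      (fun Q : ℝ =>
        C * (1 - 1 / (1 + Real.sqrt (1 + Q))) / ((1 + Real.sqrt (1 + Q)) + Q))
      (Set.Ici 0) := by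
  intro a ha b hb hab
  simp only [Set.mem_Ici] at ha hb
  set s := Real.sqrt (1 + a) with hs_def
  set t := Real.sqrt (1 + b) with ht_def
  have hs : s ^ 2 = 1 + a := Real.sq_sqrt (by linarith)
  have ht : t ^ 2 = 1 + b := Real.sq_sqrt (by linarith)
  have hs0 : 0 ≤ s := Real.sqrt_nonneg _
  have ht0 : 0 ≤ t := Real.sqrt_nonneg _
  have hs1 : 1 ≤ s := by nlinarith
  have ht1 : 1 ≤ t := by nlinarith
  have hst : s < t := Real.sqrt_lt_sqrt (by linarith) (by linarith)
  have ha' : a = s ^ 2 - 1 := by linarith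
  have hb' : b = t ^ 2 - 1 := by linarith
  simp only
  rw [ha', hb', show (1:ℝ) + (s ^ 2 - 1) = s ^ 2 by ring,
    show (1:ℝ) + (t ^ 2 - 1) = t ^ 2 by ring, Real.sqrt_sq hs0, Real.sqrt_sq ht0]
  have h1 : (0:ℝ) < 1 + s := by linarith
  have h2 : (0:ℝ) < 1 + t := by linarith
  have h3 : (0:ℝ) < 1 + s + (s ^ 2 - 1) := by nlinarith
  have h4 : (0:ℝ) < 1 + t + (t ^ 2 - 1) := by nlinarith
  have hsne : s ≠ 0 := by linarith
  have htne : t ≠ 0 := by linarith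
  have h1ne : (1:ℝ) + s ≠ 0 := by linarith
  have h2ne : (1:ℝ) + t ≠ 0 := by linarith
  have e1 : C * (1 - 1 / (1 + s)) / (1 + s + (s ^ 2 - 1)) = C / (1 + s) ^ 2 := by
    rw [show (1:ℝ) + s + (s ^ 2 - 1) = s * (1 + s) by ring]
    field_simp
    ring
  have e2 : C * (1 - 1 / (1 + t)) / (1 + t + (t ^ 2 - 1)) = C / (1 + t) ^ 2 := by
    rw [show (1:ℝ) + t + (t ^ 2 - 1) = t * (1 + t) by ring]
    field_simp
    ring
  rw [e1, e2]
  apply div_lt_div_of_pos_left hC (by positivity)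
  nlinarith
end
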